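/- Assume conditions (I1)–(I5). Then 𝒥̃ := J ∘ m is continuously Fréchet differentiable on X⁺, and its derivative is given by 𝒥̃'(w)z = J'(m(w))z for every w, z ∈ X⁺. -/

import Mathlib

open Topology Filter Set

noncomputable section

variable {X : Type*} [NormedAddCommGroup X] [NormedSpace ℝ X]

/-- Weak convergence of a sequence: `f (u n) → f w` for every continuous linear functional. -/
def WConv (u : ℕ → X) (w : X) : Prop :=
  ∀ f : X →L[ℝ] ℝ, Tendsto (fun n => f (u n)) atTop (𝓝 (f w))


section Aux
open NormedSpace
variable {X : Type*} [NormedAddCommGroup X] [NormedSpace ℝ X]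


/-- Separation: a continuous functional vanishing on a closed subspace, `= 1` at a point. -/
lemma exists_dual_vanish {Y : Submodule ℝ X} (hY : IsClosed (Y : Set X)) {x : X} (hx : x ∉ Y) :
    ∃ f : X →L[ℝ] ℝ, (∀ y ∈ Y, f y = 0) ∧ f x = 1 := by
  obtain ⟨f, u, hfx, hfy⟩ := geometric_hahn_banach_point_closed (Y.convex) hY hx
  have hf0 : ∀ y ∈ Y, f y = 0 := by
    intro y hy
    by_contra h
    have h1 : ((u - 1) / f y) • y ∈ Y := Y.smul_mem _ hy
    have := hfy _ h1
    rw [map_smul] at this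
    simp only [smul_eq_mul] at this
    rw [div_mul_cancel₀ _ h] at this
    linarith
  have hu : u < 0 := by simpa using hfy 0 Y.zero_mem
  have hfx0 : f x ≠ 0 := by nlinarith
  refine ⟨(f x)⁻¹ • f, ?_, ?_⟩
  · intro y hy; simp [hf0 y hy]
  · simp [inv_mul_cancel₀ hfx0]

/-- restriction of functionals to a subspace, as a CLM -/
noncomputable def restrDual (Y : Submodule ℝ X) : StrongDual ℝ X →L[ℝ] StrongDual ℝ ↥Y :=
  (ContinuousLinearMap.compL ℝ ↥Y X ℝ).flip Y.subtypeL

@[simp] lemma restrDual_apply (Y : Submodule ℝ X) (f : StrongDual ℝ X) (y : ↥Y) :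
    restrDual Y f y = f y := rfl

lemma reflexive_subspace {Y : Submodule ℝ X} (hY : IsClosed (Y : Set X))
    (hX : Function.Surjective (inclusionInDoubleDual ℝ X)) :
    Function.Surjective (inclusionInDoubleDual ℝ ↥Y) := by
  intro G
  obtain ⟨x, hx⟩ := hX (G.comp (restrDual Y))
  have hxY : x ∈ Y := by
    by_contra h
    obtain ⟨f, hf0, hf1⟩ := exists_dual_vanish hY h
    have h1 : restrDual Y f = 0 := by
      ext y; simpa using hf0 y y.2
    have h2 : inclusionInDoubleDual ℝ X x f = G.comp (restrDual Y) f := by rw [hx]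
    rw [dual_def] at h2
    rw [hf1] at h2
    simp [h1] at h2
  refine ⟨⟨x, hxY⟩, ?_⟩
  ext g
  obtain ⟨f, hf, -⟩ := exists_extension_norm_eq Y g
  have h2 : inclusionInDoubleDual ℝ X x f = G.comp (restrDual Y) f := by rw [hx]
  rw [dual_def] at h2
  have h3 : restrDual Y f = g := by ext y; simpa using hf y
  simp only [ContinuousLinearMap.comp_apply] at h2
  rw [h3] at h2
  rw [dual_def]
  rw [← h2]
  exact (hf ⟨x, hxY⟩).symm

lemma exists_norming (f : X →L[ℝ] ℝ) (hf : f ≠ 0) : ∃ x : X, ‖x‖ ≤ 1 ∧ ‖f‖ / 2 ≤ f x := by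
  have hfn : 0 < ‖f‖ := norm_pos_iff.mpr hf
  by_contra h
  push_neg at h
  have hb : ∀ x : X, ‖f x‖ ≤ (‖f‖ / 2) * ‖x‖ := by
    intro x
    rcases eq_or_ne x 0 with rfl | hx
    · simp
    · have hxn : 0 < ‖x‖ := norm_pos_iff.mpr hx
      have h1 := h (‖x‖⁻¹ • x) (by simp [norm_smul, inv_mul_cancel₀ hxn.ne'])
      have h2 := h (-(‖x‖⁻¹ • x)) (by simp [norm_smul, inv_mul_cancel₀ hxn.ne'])
      rw [map_neg] at h2
      rw [map_smul] at h1 h2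
      simp only [smul_eq_mul] at h1 h2
      have e1 : f x = (‖x‖⁻¹ * f x) * ‖x‖ := by field_simp
      rw [Real.norm_eq_abs, abs_le]
      constructor
      · rw [e1]; nlinarith [mul_lt_mul_of_pos_right h2 hxn]
      · rw [e1]; nlinarith [mul_lt_mul_of_pos_right h1 hxn]
  have := ContinuousLinearMap.opNorm_le_bound f (by positivity) hb
  linarith

lemma separable_of_dual_separable [h : TopologicalSpace.SeparableSpace (StrongDual ℝ X)] :
    TopologicalSpace.SeparableSpace X := by
  obtain ⟨D, hDc, hDd⟩ := h.exists_countable_dense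
  have hDne : D.Nonempty := hDd.nonempty
  obtain ⟨g, hg⟩ := hDc.exists_eq_range hDne
  have hgd : DenseRange g := by rw [hg] at hDd; exact hDd
  -- choose norming vectors
  have hch : ∀ n : ℕ, ∃ x : X, ‖x‖ ≤ 1 ∧ ‖g n‖ / 2 ≤ g n x := by
    intro n
    rcases eq_or_ne (g n) 0 with h0 | h0
    · exact ⟨0, by simp, by simp [h0]⟩
    · exact exists_norming _ h0
  choose xv hxv1 hxv2 using hch
  set Y : Submodule ℝ X := Submodule.span ℝ (Set.range xv) with hYdef
  have hsep : TopologicalSpace.IsSeparable (closure (Y : Set X)) :=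
    (((Set.countable_range xv).isSeparable).span (R := ℝ)).closure
  have hcl : closure (Y : Set X) = Set.univ := by
    by_contra hne
    obtain ⟨z, hz⟩ : ∃ z : X, z ∉ Y.topologicalClosure := by
      by_contra hz
      push_neg at hz
      apply hne
      ext t; have hzt := hz t; rw [← SetLike.mem_coe, Submodule.topologicalClosure_coe] at hzt; simpa using hzt
    obtain ⟨f, hf0, hf1⟩ := exists_dual_vanish Y.isClosed_topologicalClosure hz
    have hfne : f ≠ 0 := by
      intro h0; rw [h0] at hf1; simp at hf1
    -- approximate f by g n
    have : ∀ ε : ℝ, 0 < ε → ∃ n, ‖g n - f‖ < ε := by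
      intro ε hε
      obtain ⟨n, hn⟩ := Metric.denseRange_iff.mp hgd f ε hε
      exact ⟨n, by rwa [dist_eq_norm, norm_sub_rev] at hn⟩
    have hkey : ∀ ε : ℝ, 0 < ε → ‖f‖ ≤ 3 * ε := by
      intro ε hε
      obtain ⟨n, hn⟩ := this ε hε
      have h1 : g n (xv n) = (g n - f) (xv n) + f (xv n) := by simp
      have h2 : f (xv n) = 0 := by
        apply hf0
        apply Y.le_topologicalClosure
        exact Submodule.subset_span ⟨n, rfl⟩
      have h3 : (g n - f) (xv n) ≤ ‖g n - f‖ * ‖xv n‖ := by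
        calc (g n - f) (xv n) ≤ ‖(g n - f) (xv n)‖ := le_abs_self _
        _ ≤ ‖g n - f‖ * ‖xv n‖ := (g n - f).le_opNorm _
      have h4 : ‖g n - f‖ * ‖xv n‖ ≤ ε := by
        have := hxv1 n
        nlinarith [norm_nonneg (g n - f)]
      have h5 : ‖g n‖ / 2 ≤ ε := by
        have := hxv2 n
        rw [h1, h2] at this
        linarith
      calc ‖f‖ ≤ ‖g n‖ + ‖g n - f‖ := by
            have h6 : ‖f‖ - ‖g n‖ ≤ ‖f - g n‖ := norm_sub_norm_le f (g n)
            have h7 : ‖f - g n‖ = ‖g n - f‖ := norm_sub_rev f (g n)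
            linarith
      _ ≤ 3 * ε := by linarith
    have : ‖f‖ ≤ 0 := by
      by_contra hc
      push_neg at hc
      have := hkey (‖f‖ / 6) (by linarith)
      linarith
    exact hfne (by simpa using le_antisymm this (norm_nonneg f))
  have : TopologicalSpace.IsSeparable (Set.univ : Set X) := hcl ▸ hsep
  exact TopologicalSpace.isSeparable_univ_iff.mp this

lemma weak_seq_compact (hrefl : Function.Surjective (inclusionInDoubleDual ℝ X))
    (x : ℕ → X) (C : ℝ) (hx : ∀ n, ‖x n‖ ≤ C) :
    ∃ (y : X) (φ : ℕ → ℕ), StrictMono φ ∧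
      ∀ f : X →L[ℝ] ℝ, Tendsto (fun n => f (x (φ n))) atTop (𝓝 (f y)) := by
  classical
  set Y : Submodule ℝ X := (Submodule.span ℝ (Set.range x)).topologicalClosure with hY
  have hYc : IsClosed (Y : Set X) := Submodule.isClosed_topologicalClosure _
  have hxY : ∀ n, x n ∈ Y := fun n =>
    (Submodule.le_topologicalClosure _) (Submodule.subset_span ⟨n, rfl⟩)
  set x' : ℕ → ↥Y := fun n => ⟨x n, hxY n⟩ with hx'
  have hx'n : ∀ n, ‖x' n‖ ≤ C := hx
  have hC0 : 0 ≤ C := le_trans (norm_nonneg _) (hx 0)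
  haveI hYsep : TopologicalSpace.SeparableSpace ↥Y := by
    have h1 : TopologicalSpace.IsSeparable (Y : Set X) := by
      have h2 := (((Set.countable_range x).isSeparable).span (R := ℝ)).closure
      have h3 : (Y : Set X) ⊆ closure (Submodule.span ℝ (Set.range x) : Set X) := by
        rw [hY]; exact subset_rfl
      exact h2.mono h3
    exact h1.separableSpace
  have hYrefl := reflexive_subspace hYc hrefl
  haveI : TopologicalSpace.SeparableSpace (StrongDual ℝ (StrongDual ℝ ↥Y)) :=
    (Function.Surjective.denseRange hYrefl).separableSpace
      (inclusionInDoubleDual ℝ ↥Y).continuous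
  haveI hsepD : TopologicalSpace.SeparableSpace (StrongDual ℝ ↥Y) := separable_of_dual_separable (X := StrongDual ℝ ↥Y) (h := this)
  obtain ⟨D, hDc, hDd⟩ := hsepD.exists_countable_dense
  obtain ⟨g, hg⟩ := hDc.exists_eq_range hDd.nonempty
  have hgd : DenseRange g := by rw [hg] at hDd; exact hDd
  -- diagonal extraction
  set K : Set (ℕ → ℝ) := Set.pi Set.univ (fun k => Set.Icc (-(‖g k‖ * C)) (‖g k‖ * C)) with hK
  have hKc : IsCompact K := isCompact_univ_pi fun k => isCompact_Icc
  have hFK : ∀ n, (fun k => g k (x' n)) ∈ K := by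
    intro n
    rw [Set.mem_univ_pi]
    intro k
    have habs : |g k (x' n)| ≤ ‖g k‖ * C := by
      calc |g k (x' n)| = ‖g k (x' n)‖ := rfl
      _ ≤ ‖g k‖ * ‖x' n‖ := (g k).le_opNorm _
      _ ≤ ‖g k‖ * C := mul_le_mul_of_nonneg_left (hx'n n) (norm_nonneg (g k))
    rcases abs_le.mp habs with ⟨hl, hr⟩
    exact ⟨hl, hr⟩
  obtain ⟨l, _, φ, hφ, hconv⟩ := hKc.isSeqCompact hFK
  have hconv' : ∀ k, Tendsto (fun j => g k (x' (φ j))) atTop (𝓝 (l k)) := by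
    have := tendsto_pi_nhds.mp hconv
    exact this
  have hcauchy : ∀ h : StrongDual ℝ ↥Y, ∃ c, Tendsto (fun j => h (x' (φ j))) atTop (𝓝 c) := by
    intro h
    have hcs : CauchySeq (fun j => h (x' (φ j))) := by
      rw [Metric.cauchySeq_iff]
      intro ε hε
      obtain ⟨k, hk⟩ := Metric.denseRange_iff.mp hgd h (ε / (4 * (C + 1))) (by positivity)
      have hck : CauchySeq (fun j => g k (x' (φ j))) := (hconv' k).cauchySeq
      rw [Metric.cauchySeq_iff] at hck
      obtain ⟨N, hN⟩ := hck (ε / 3) (by positivity)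
      refine ⟨N, fun i hi j hj => ?_⟩
      have d1 : ∀ n : ℕ, |h (x' (φ n)) - g k (x' (φ n))| ≤ ε / 3 := by
        intro n
        have e1 : |h (x' (φ n)) - g k (x' (φ n))| = ‖(h - g k) (x' (φ n))‖ := by
          simp [Real.norm_eq_abs]
        rw [e1]
        calc ‖(h - g k) (x' (φ n))‖ ≤ ‖h - g k‖ * ‖x' (φ n)‖ := (h - g k).le_opNorm _
        _ ≤ ‖h - g k‖ * (C + 1) := by
            have := hx'n (φ n)
            nlinarith [norm_nonneg (h - g k)]
        _ ≤ ε / 3 := by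
            have hd : ‖h - g k‖ < ε / (4 * (C + 1)) := by
              exact lt_of_eq_of_lt (dist_eq_norm h (g k)).symm hk
            rw [div_mul_eq_div_div] at hd
            have h2 : ‖h - g k‖ * (C + 1) < ε / 4 := by
              rw [← div_mul_cancel₀ (ε / 4) (show (C + 1 : ℝ) ≠ 0 by positivity)]
              exact mul_lt_mul_of_pos_right hd (by positivity)
            linarith
      have hij := hN i hi j hj
      rw [Real.dist_eq] at hij ⊢
      have t1 := d1 i
      have t2 := d1 j
      have : h (x' (φ i)) - h (x' (φ j)) =
          (h (x' (φ i)) - g k (x' (φ i))) + (g k (x' (φ i)) - g k (x' (φ j)))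
          + (g k (x' (φ j)) - h (x' (φ j))) := by ring
      rw [this]
      calc |_ + _ + _| ≤ |(h (x' (φ i)) - g k (x' (φ i))) + (g k (x' (φ i)) - g k (x' (φ j)))|
            + |g k (x' (φ j)) - h (x' (φ j))| := abs_add_le _ _
      _ ≤ |h (x' (φ i)) - g k (x' (φ i))| + |g k (x' (φ i)) - g k (x' (φ j))|
            + |g k (x' (φ j)) - h (x' (φ j))| := by
          have := abs_add_le (h (x' (φ i)) - g k (x' (φ i))) (g k (x' (φ i)) - g k (x' (φ j)))
          linarith
      _ < ε := by
          have : |g k (x' (φ j)) - h (x' (φ j))| = |h (x' (φ j)) - g k (x' (φ j))| := abs_sub_comm _ _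
          rw [this]
          linarith
    exact cauchySeq_tendsto_of_complete hcs
  choose lim hlim using hcauchy
  have hadd : ∀ h₁ h₂ : StrongDual ℝ ↥Y, lim (h₁ + h₂) = lim h₁ + lim h₂ := by
    intro h₁ h₂
    refine tendsto_nhds_unique (hlim (h₁ + h₂)) ?_
    have := (hlim h₁).add (hlim h₂)
    simpa using this
  have hsmul : ∀ (c : ℝ) (h : StrongDual ℝ ↥Y), lim (c • h) = c * lim h := by
    intro c h
    refine tendsto_nhds_unique (hlim (c • h)) ?_
    have := (hlim h).const_mul c
    simpa using this
  have hbdd : ∀ h : StrongDual ℝ ↥Y, ‖lim h‖ ≤ C * ‖h‖ := by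
    intro h
    have : ∀ j, ‖h (x' (φ j))‖ ≤ C * ‖h‖ := by
      intro j
      calc ‖h (x' (φ j))‖ ≤ ‖h‖ * ‖x' (φ j)‖ := h.le_opNorm _
      _ ≤ ‖h‖ * C := mul_le_mul_of_nonneg_left (hx'n (φ j)) (norm_nonneg h)
      _ = C * ‖h‖ := mul_comm _ _
    exact le_of_tendsto ((hlim h).norm) (Filter.Eventually.of_forall this)
  set Λ : StrongDual ℝ ↥Y →L[ℝ] ℝ :=
    LinearMap.mkContinuous
      { toFun := lim, map_add' := hadd, map_smul' := hsmul } C hbdd with hΛdef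
  obtain ⟨yh, hyh⟩ := hYrefl Λ
  refine ⟨(yh : X), φ, hφ, ?_⟩
  intro f
  have h1 : ∀ n, f (x (φ n)) = (restrDual Y f) (x' (φ n)) := fun n => rfl
  have h2 : lim (restrDual Y f) = f yh := by
    have e1 : inclusionInDoubleDual ℝ ↥Y yh (restrDual Y f) = Λ (restrDual Y f) := by rw [hyh]
    rw [dual_def] at e1
    exact e1.symm
  have := hlim (restrDual Y f)
  rw [h2] at this
  refine this.congr ?_
  intro n
  exact (h1 n).symm

end Aux

/-- The setting: `X` is a reflexive Banach space with a topological direct sum decomposition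
`X = X⁺ ⊕ X⁻` into closed subspaces, `X⁺` is a Hilbert space (its norm satisfies the
parallelogram law), `‖u‖² = ‖u⁺‖² + ‖u⁻‖²`, and `I : X → ℝ` is of class `C¹`. -/
structure Setting (X : Type*) [NormedAddCommGroup X] [NormedSpace ℝ X] where
  complete : CompleteSpace X
  reflexive : Function.Surjective (NormedSpace.inclusionInDoubleDual ℝ X)
  Xp : Submodule ℝ X
  Xm : Submodule ℝ X
  Xp_closed : IsClosed (Xp : Set X)
  Xm_closed : IsClosed (Xm : Set X)
  compl : IsCompl Xp Xm
  P : X →ₗ[ℝ] X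
  Pm : X →ₗ[ℝ] X
  P_mem : ∀ u, P u ∈ Xp
  Pm_mem : ∀ u, Pm u ∈ Xm
  P_add_Pm : ∀ u, P u + Pm u = u
  P_cont : Continuous P
  Pm_cont : Continuous Pm
  norm_sq : ∀ u : X, ‖u‖ ^ 2 = ‖P u‖ ^ 2 + ‖Pm u‖ ^ 2
  parallelogram : ∀ u ∈ Xp, ∀ v ∈ Xp,
    ‖u + v‖ ^ 2 + ‖u - v‖ ^ 2 = 2 * ‖u‖ ^ 2 + 2 * ‖v‖ ^ 2
  I : X → ℝ
  I_C1 : ContDiff ℝ 1 I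

namespace Setting

variable (S : Setting X)

/-- The functional `J(u) = ½‖u⁺‖² − I(u)`. -/
def J : X → ℝ := fun u => (1 / 2) * ‖S.P u‖ ^ 2 - S.I u

/-- `M = {u ∈ X : I'(u)v = 0 for all v ∈ X⁻}`. -/
def M : Set X := {u | ∀ v ∈ S.Xm, fderiv ℝ S.I u v = 0}

/-- The Nehari–Pankov set `N = {u ∈ X \ X⁻ : J'(u)u = 0 and J'(u)v = 0 for all v ∈ X⁻}`. -/
def N : Set X :=
  {u | u ∉ S.Xm ∧ fderiv ℝ S.J u u = 0 ∧ ∀ v ∈ S.Xm, fderiv ℝ S.J u v = 0}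

/-- `T`-convergence: `uₙ⁺ → u⁺` in norm and `uₙ⁻ ⇀ u⁻` weakly. -/
def TConv (u : ℕ → X) (w : X) : Prop :=
  Tendsto (fun n => S.P (u n)) atTop (𝓝 (S.P w)) ∧ WConv (fun n => S.Pm (u n)) (S.Pm w)

/-- (I1): `I(u) ≥ I(0) = 0`. -/
def I1 : Prop := S.I 0 = 0 ∧ ∀ u, 0 ≤ S.I u

/-- (I2): `I` is sequentially `T`-lower semicontinuous. -/
def I2 : Prop := ∀ (u : ℕ → X) (w : X), S.TConv u w →
  S.I w ≤ atTop.liminf fun n => S.I (u n)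

/-- (I3): if `uₙ →_T u` and `I(uₙ) → I(u)` then `uₙ → u` in norm. -/
def I3 : Prop := ∀ (u : ℕ → X) (w : X), S.TConv u w →
  Tendsto (fun n => S.I (u n)) atTop (𝓝 (S.I w)) → Tendsto u atTop (𝓝 w)

/-- (I4): `‖uₙ⁺‖ + I(uₙ) → ∞` whenever `‖uₙ‖ → ∞`. -/
def I4 : Prop := ∀ u : ℕ → X, Tendsto (fun n => ‖u n‖) atTop atTop →
  Tendsto (fun n => ‖S.P (u n)‖ + S.I (u n)) atTop atTop

/-- (I5): if `u ∈ M` then `I(u) < I(u + v)` for every `v ∈ X⁻ \ {0}`. -/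
def I5 : Prop := ∀ u ∈ S.M, ∀ v ∈ S.Xm, v ≠ 0 → S.I u < S.I (u + v)

/-- `m : X⁺ → M` assigns to each `w ∈ X⁺` the point `m(w) ∈ M ∩ (w + X⁻)` which is the
unique maximizer of `J` on `w + X⁻`. -/
def IsMaxMap (m : X → X) : Prop :=
  ∀ w ∈ S.Xp, m w ∈ S.M ∧ m w - w ∈ S.Xm ∧
    ∀ z ∈ S.Xm, w + z ≠ m w → S.J (w + z) < S.J (m w)

/-- The reduced functional `𝒥̃ = J ∘ m` on `X⁺`. -/
def Jt (m : X → X) : ↥S.Xp → ℝ := fun w => S.J (m (w : X))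

/-- (I6): with radius `r` the infimum `a` of `J` on the sphere of radius `r` in `X⁺`
is positive. -/
def I6 (r a : ℝ) : Prop :=
  0 < r ∧ a = sInf (S.J '' {u : X | u ∈ S.Xp ∧ ‖u‖ = r}) ∧ 0 < a

/-- (I7): `Q` is an infinite-dimensional closed subspace of `X⁺` such that
`I(m(tₙuₙ))/tₙ² → ∞` whenever `tₙ → ∞`, `uₙ ∈ Q` and `uₙ → u ≠ 0`. -/
def I7 (m : X → X) (Q : Submodule ℝ X) : Prop :=
  Q ≤ S.Xp ∧ IsClosed (Q : Set X) ∧ ¬ FiniteDimensional ℝ Q ∧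
    ∀ (t : ℕ → ℝ) (u : ℕ → X) (w : X), Tendsto t atTop atTop → (∀ n, u n ∈ Q) →
      Tendsto u atTop (𝓝 w) → w ≠ 0 →
      Tendsto (fun n => S.I (m (t n • u n)) / (t n) ^ 2) atTop atTop

/-- (I8): `((t²−1)/2)·I'(u)u + t·I'(u)v + I(u) − I(tu+v) ≤ 0` for `u ∈ N`, `t ≥ 0`,
`v ∈ X⁻`. -/
def I8 : Prop :=
  ∀ u ∈ S.N, ∀ t : ℝ, 0 ≤ t → ∀ v ∈ S.Xm,
    ((t ^ 2 - 1) / 2) * fderiv ℝ S.I u u + t * fderiv ℝ S.I u v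
      + S.I u - S.I (t • u + v) ≤ 0

end Setting


section Helpers
open NormedSpace
variable {X : Type*} [NormedAddCommGroup X] [NormedSpace ℝ X] (S : Setting X)

namespace Setting

lemma coe_norm' (w : ↥S.Xp) : ‖(w : X)‖ = ‖w‖ := rfl

lemma P_of_Xp {u : X} (hu : u ∈ S.Xp) : S.P u = u := by
  have h1 : u - S.P u = S.Pm u := (eq_sub_of_add_eq' (S.P_add_Pm u)).symm
  have h2 : u - S.P u ∈ S.Xp := S.Xp.sub_mem hu (S.P_mem u)
  have h3 : u - S.P u ∈ S.Xm := by rw [h1]; exact S.Pm_mem u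
  have h0 : u - S.P u = 0 := (Submodule.disjoint_def.mp S.compl.disjoint) _ h2 h3
  have := sub_eq_zero.mp h0
  exact this.symm

lemma P_of_Xm {u : X} (hu : u ∈ S.Xm) : S.P u = 0 := by
  have h1 : S.P u = u - S.Pm u := eq_sub_of_add_eq (S.P_add_Pm u)
  have h2 : S.P u ∈ S.Xm := by rw [h1]; exact S.Xm.sub_mem hu (S.Pm_mem u)
  exact (Submodule.disjoint_def.mp S.compl.disjoint) _ (S.P_mem u) h2

lemma Pm_eq (u : X) : S.Pm u = u - S.P u := eq_sub_of_add_eq' (S.P_add_Pm u)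

lemma Pm_of_Xp {u : X} (hu : u ∈ S.Xp) : S.Pm u = 0 := by
  rw [Pm_eq, P_of_Xp S hu, sub_self]

lemma Pm_of_Xm {u : X} (hu : u ∈ S.Xm) : S.Pm u = u := by
  rw [Pm_eq, P_of_Xm S hu, sub_zero]

/-- `P` as a continuous linear map into `↥Xp`. -/
noncomputable def Q : X →L[ℝ] ↥S.Xp :=
  ContinuousLinearMap.codRestrict ⟨S.P, S.P_cont⟩ S.Xp S.P_mem

lemma Q_coe (u : X) : ((S.Q u : X)) = S.P u := rfl

lemma norm_Q (u : X) : ‖S.Q u‖ = ‖S.P u‖ := rfl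

lemma I_cont : Continuous S.I := S.I_C1.continuous

lemma J_contDiff : ContDiff ℝ 1 S.J := by
  have hpar : ∀ x y : ↥S.Xp,
      ‖x + y‖ * ‖x + y‖ + ‖x - y‖ * ‖x - y‖ = 2 * (‖x‖ * ‖x‖ + ‖y‖ * ‖y‖) := by
    intro x y
    have := S.parallelogram ↑x x.2 ↑y y.2
    have e1 : ‖x + y‖ = ‖(↑x + ↑y : X)‖ := rfl
    have e2 : ‖x - y‖ = ‖(↑x - ↑y : X)‖ := rfl
    have e3 : ‖x‖ = ‖(x : X)‖ := rfl
    have e4 : ‖y‖ = ‖(y : X)‖ := rfl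
    rw [e1, e2, e3, e4]
    nlinarith [this]
  letI : InnerProductSpace ℝ ↥S.Xp := InnerProductSpace.ofNorm ℝ hpar
  have hJ : S.J = fun u => (1 / 2 : ℝ) * (inner ℝ (S.Q u) (S.Q u) : ℝ) - S.I u := by
    funext u
    unfold J
    rw [real_inner_self_eq_norm_sq, norm_Q]
  rw [hJ]
  exact (contDiff_const.mul (ContDiff.inner ℝ S.Q.contDiff S.Q.contDiff)).sub S.I_C1

lemma J_cont : Continuous S.J := (S.J_contDiff).continuous

lemma J_split {w z : X} (hw : w ∈ S.Xp) (hz : z ∈ S.Xm) :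
    S.J (w + z) = (1 / 2) * ‖w‖ ^ 2 - S.I (w + z) := by
  unfold J
  rw [map_add, P_of_Xp S hw, P_of_Xm S hz, add_zero]

variable {m : X → X}

lemma J_le_m (hm : S.IsMaxMap m) {w z : X} (hw : w ∈ S.Xp) (hz : z ∈ S.Xm) :
    S.J (w + z) ≤ S.J (m w) := by
  rcases eq_or_ne (w + z) (m w) with h | h
  · rw [h]
  · exact le_of_lt ((hm w hw).2.2 z hz h)

lemma P_m (hm : S.IsMaxMap m) {w : X} (hw : w ∈ S.Xp) : S.P (m w) = w := by
  have h1 : m w = w + (m w - w) := by abel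
  rw [h1, map_add, P_of_Xp S hw, P_of_Xm S (hm w hw).2.1, add_zero]

lemma J_m_eq (hm : S.IsMaxMap m) {w : X} (hw : w ∈ S.Xp) :
    S.J (m w) = (1 / 2) * ‖w‖ ^ 2 - S.I (m w) := by
  unfold J
  rw [P_m S hm hw]

lemma I_m_le (hm : S.IsMaxMap m) {w z : X} (hw : w ∈ S.Xp) (hz : z ∈ S.Xm) :
    S.I (m w) ≤ S.I (w + z) := by
  have := J_le_m S hm hw hz
  rw [J_split S hw hz, J_m_eq S hm hw] at this
  linarith

lemma bdd_prefix (f : ℕ → ℝ) (N : ℕ) : ∃ B, ∀ i < N, f i ≤ B := by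
  induction N with
  | zero => exact ⟨0, fun i hi => absurd hi (Nat.not_lt_zero i)⟩
  | succ n ih =>
      obtain ⟨B, hB⟩ := ih
      refine ⟨max B (f n), fun i hi => ?_⟩
      rcases Nat.lt_succ_iff_lt_or_eq.mp hi with h | h
      · exact (hB i h).trans (le_max_left _ _)
      · subst h; exact le_max_right _ _

lemma m_subseq (hm : S.IsMaxMap m) (hI1 : S.I1) (hI2 : S.I2) (hI3 : S.I3) (hI4 : S.I4)
    (w : ℕ → ↥S.Xp) (w₀ : ↥S.Xp) (hw : Tendsto w atTop (𝓝 w₀)) :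
    ∃ φ : ℕ → ℕ, StrictMono φ ∧ Tendsto (fun n => m ↑(w (φ n))) atTop (𝓝 (m ↑w₀)) := by
  classical
  set u : ℕ → X := fun n => m ↑(w n) with hu
  set u₀ : X := m ↑w₀ with hu₀
  have hwX : Tendsto (fun n => (↑(w n) : X)) atTop (𝓝 ↑w₀) :=
    (continuous_subtype_val.tendsto w₀).comp hw
  have hz₀ : u₀ - ↑w₀ ∈ S.Xm := (hm ↑w₀ w₀.2).2.1
  have hIbound : ∀ n, S.I (u n) ≤ S.I (↑(w n) + (u₀ - ↑w₀)) := fun n =>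
    S.I_m_le hm (w n).2 hz₀
  have hbtend : Tendsto (fun n => S.I (↑(w n) + (u₀ - ↑w₀))) atTop (𝓝 (S.I u₀)) := by
    have h1 : Tendsto (fun n => (↑(w n) : X) + (u₀ - ↑w₀)) atTop (𝓝 (↑w₀ + (u₀ - ↑w₀))) :=
      hwX.add tendsto_const_nhds
    have h2 : (↑w₀ : X) + (u₀ - ↑w₀) = u₀ := by abel
    rw [h2] at h1
    exact (S.I_cont.tendsto u₀).comp h1
  have hbdd : ∃ C, ∀ n, ‖u n‖ ≤ C := by
    by_contra hc
    push_neg at hc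
    have hfreq : ∀ k : ℕ, ∃ᶠ n in atTop, (k : ℝ) < ‖u n‖ := by
      intro k
      by_contra hk
      rw [Filter.not_frequently] at hk
      obtain ⟨N, hN⟩ := Filter.eventually_atTop.mp hk
      obtain ⟨B, hB⟩ := bdd_prefix (fun i => ‖u i‖) N
      obtain ⟨n, hn⟩ := hc (max B k)
      rcases lt_or_ge n N with h | h
      · exact absurd ((hB n h).trans (le_max_left _ _)) (not_le.mpr hn)
      · have h1 := hN n h
        push_neg at h1
        exact absurd (h1.trans (le_max_right _ _)) (not_le.mpr hn)
    obtain ⟨ψ, hψ, hψP⟩ := Filter.extraction_forall_of_frequently hfreq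
    have hnorm : Tendsto (fun n => ‖u (ψ n)‖) atTop atTop :=
      tendsto_atTop_mono (fun n => (hψP n).le) tendsto_natCast_atTop_atTop
    have h4 := hI4 (fun n => u (ψ n)) hnorm
    have hPu : ∀ n, S.P (u n) = ↑(w n) := fun n => S.P_m hm (w n).2
    have hPn : Tendsto (fun n => ‖S.P (u (ψ n))‖) atTop (𝓝 ‖(↑w₀ : X)‖) := by
      simp only [hPu]
      exact (continuous_norm.tendsto _).comp (hwX.comp hψ.tendsto_atTop)
    have hIup : Tendsto (fun n => S.I (u (ψ n))) atTop atTop := by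
      have hev : ∀ᶠ n in atTop, ‖S.P (u (ψ n))‖ ≤ ‖(↑w₀ : X)‖ + 1 :=
        hPn.eventually_le_const (by linarith [norm_nonneg ((↑w₀ : X))])
      have hsum : Tendsto
          (fun n => ‖S.P (u (ψ n))‖ + S.I (u (ψ n)) + -(‖(↑w₀ : X)‖ + 1)) atTop atTop :=
        tendsto_atTop_add_const_right _ _ h4
      apply tendsto_atTop_mono' _ _ hsum
      filter_upwards [hev] with n hn
      linarith
    have hb' : Tendsto (fun n => S.I (↑(w (ψ n)) + (u₀ - ↑w₀))) atTop (𝓝 (S.I u₀)) :=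
      hbtend.comp hψ.tendsto_atTop
    have hev1 : ∀ᶠ n in atTop, S.I u₀ + 1 < S.I (u (ψ n)) := hIup.eventually_gt_atTop _
    have hev2 : ∀ᶠ n in atTop, S.I (↑(w (ψ n)) + (u₀ - ↑w₀)) < S.I u₀ + 1 :=
      hb'.eventually_lt_const (by linarith)
    obtain ⟨n, h1, h2⟩ := (hev1.and hev2).exists
    exact absurd (hIbound (ψ n)) (by linarith)
  obtain ⟨C, hC⟩ := hbdd
  have hPmb : ∀ n, ‖S.Pm (u n)‖ ≤ C := by
    intro n
    have h1 := S.norm_sq (u n)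
    have h3 : ‖S.Pm (u n)‖ ≤ ‖u n‖ := by
      by_contra h
      push_neg at h
      nlinarith [norm_nonneg (u n), norm_nonneg (S.Pm (u n)), norm_nonneg (S.P (u n))]
    exact h3.trans (hC n)
  obtain ⟨y, φ, hφ, hwk⟩ := weak_seq_compact S.reflexive (fun n => S.Pm (u n)) C hPmb
  have hyXm : y ∈ S.Xm := by
    by_contra hy
    obtain ⟨f, hf0, hf1⟩ := exists_dual_vanish S.Xm_closed hy
    have h1 : Tendsto (fun n => f (S.Pm (u (φ n)))) atTop (𝓝 (f y)) := hwk f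
    have h2 : (fun n => f (S.Pm (u (φ n)))) = fun _ => (0 : ℝ) :=
      funext fun n => hf0 _ (S.Pm_mem _)
    rw [h2] at h1
    have h3 := tendsto_nhds_unique h1 tendsto_const_nhds
    rw [hf1] at h3
    norm_num at h3
  set yt : X := ↑w₀ + y with hyt
  have hTC : S.TConv (fun n => u (φ n)) yt := by
    constructor
    · have e1 : ∀ n, S.P (u (φ n)) = ↑(w (φ n)) := fun n => S.P_m hm (w (φ n)).2
      have e2 : S.P yt = ↑w₀ := by
        rw [hyt, map_add, S.P_of_Xp w₀.2, S.P_of_Xm hyXm, add_zero]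
      rw [e2]
      simp only [e1]
      exact hwX.comp hφ.tendsto_atTop
    · have e2 : S.Pm yt = y := by
        rw [hyt, map_add, S.Pm_of_Xp w₀.2, S.Pm_of_Xm hyXm, zero_add]
      rw [e2]
      exact hwk
  set a : ℕ → ℝ := fun n => S.I (u (φ n)) with ha
  have ha0 : ∀ n, 0 ≤ a n := fun n => hI1.2 _
  have hab : ∀ n, a n ≤ S.I (↑(w (φ n)) + (u₀ - ↑w₀)) := fun n => hIbound (φ n)
  have hbt : Tendsto (fun n => S.I (↑(w (φ n)) + (u₀ - ↑w₀))) atTop (𝓝 (S.I u₀)) :=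
    hbtend.comp hφ.tendsto_atTop
  have hbddA : IsBoundedUnder (· ≤ ·) atTop a :=
    (hbt.isBoundedUnder_le).mono_le (Eventually.of_forall hab)
  have hbddB : IsBoundedUnder (· ≥ ·) atTop a :=
    ⟨0, Filter.eventually_map.mpr (Eventually.of_forall ha0)⟩
  have hlimsup : limsup a atTop ≤ S.I u₀ := by
    have h5 := limsup_le_limsup (Eventually.of_forall hab)
      (hbddB.isCoboundedUnder_le) (hbt.isBoundedUnder_le)
    rwa [hbt.limsup_eq] at h5
  have hI2' : S.I yt ≤ atTop.liminf a := hI2 (fun n => u (φ n)) yt hTC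
  have hIyt : S.I yt ≤ S.I u₀ := by
    have h5 : atTop.liminf a ≤ atTop.limsup a := liminf_le_limsup hbddA hbddB
    exact le_trans hI2' (le_trans h5 hlimsup)
  have hyteq : yt = u₀ := by
    by_contra hne
    have h6 : S.J yt < S.J u₀ := by
      have := (hm ↑w₀ w₀.2).2.2 y hyXm (by rw [← hyt]; exact hne)
      rwa [← hyt] at this
    have e1 : S.J yt = (1 / 2) * ‖(↑w₀ : X)‖ ^ 2 - S.I yt := by
      rw [hyt]; exact S.J_split w₀.2 hyXm
    have e2 : S.J u₀ = (1 / 2) * ‖(↑w₀ : X)‖ ^ 2 - S.I u₀ := S.J_m_eq hm w₀.2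
    rw [e1, e2] at h6
    linarith
  have hIconv : Tendsto a atTop (𝓝 (S.I u₀)) := by
    apply tendsto_of_le_liminf_of_limsup_le _ hlimsup hbddA hbddB
    rw [← hyteq]
    exact hI2'
  have hfinal := hI3 (fun n => u (φ n)) yt hTC (by rw [hyteq]; exact hIconv)
  rw [hyteq] at hfinal
  exact ⟨φ, hφ, hfinal⟩

lemma m_cont (hm : S.IsMaxMap m) (hI1 : S.I1) (hI2 : S.I2) (hI3 : S.I3) (hI4 : S.I4) :
    Continuous (fun v : ↥S.Xp => m ↑v) := by
  rw [continuous_iff_seqContinuous]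
  intro w w₀ hw
  apply Filter.tendsto_of_subseq_tendsto
  intro ns hns
  obtain ⟨φ, hφ, h⟩ := S.m_subseq hm hI1 hI2 hI3 hI4 (fun k => w (ns k)) w₀ (hw.comp hns)
  exact ⟨φ, h⟩

lemma hasFDerivAt_Jt (hm : S.IsMaxMap m) (hI1 : S.I1) (hI2 : S.I2) (hI3 : S.I3) (hI4 : S.I4)
    (w₀ : ↥S.Xp) :
    HasFDerivAt (S.Jt m) ((fderiv ℝ S.J (m ↑w₀)).comp (S.Xp.subtypeL)) w₀ := by
  set u₀ : X := m ↑w₀ with hu₀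
  set L : ↥S.Xp →L[ℝ] ℝ := (fderiv ℝ S.J u₀).comp (S.Xp.subtypeL) with hLdef
  rw [hasFDerivAt_iff_isLittleO_nhds_zero, Asymptotics.isLittleO_iff]
  intro c hc
  have hcont : Continuous (fderiv ℝ S.J) := S.J_contDiff.continuous_fderiv one_ne_zero
  obtain ⟨δ, hδ0, hδ⟩ : ∃ δ > 0, ∀ ξ : X, ‖ξ - u₀‖ < δ →
      ‖fderiv ℝ S.J ξ - fderiv ℝ S.J u₀‖ ≤ c := by
    obtain ⟨δ, hδ0, hδ⟩ := Metric.continuousAt_iff.mp (hcont.continuousAt (x := u₀)) c hc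
    refine ⟨δ, hδ0, fun ξ hξ => ?_⟩
    have h1 := hδ (show dist ξ u₀ < δ by rwa [dist_eq_norm])
    rw [dist_eq_norm] at h1
    exact h1.le
  have hMVT : ∀ p q : X, p ∈ Metric.ball u₀ δ → q ∈ Metric.ball u₀ δ →
      |S.J q - S.J p - fderiv ℝ S.J u₀ (q - p)| ≤ c * ‖q - p‖ := by
    intro p q hp hq
    have hdiffJ : ∀ ξ ∈ Metric.ball u₀ δ,
        HasFDerivWithinAt (fun v => S.J v - fderiv ℝ S.J u₀ v)
          (fderiv ℝ S.J ξ - fderiv ℝ S.J u₀) (Metric.ball u₀ δ) ξ := by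
      intro ξ _
      have h1 : HasFDerivAt S.J (fderiv ℝ S.J ξ) ξ :=
        (S.J_contDiff.differentiable one_ne_zero ξ).hasFDerivAt
      exact (h1.sub ((fderiv ℝ S.J u₀).hasFDerivAt)).hasFDerivWithinAt
    have hbound : ∀ ξ ∈ Metric.ball u₀ δ, ‖fderiv ℝ S.J ξ - fderiv ℝ S.J u₀‖ ≤ c := by
      intro ξ hξ
      exact hδ ξ (by rwa [Metric.mem_ball, dist_eq_norm] at hξ)
    have hkey := (convex_ball u₀ δ).norm_image_sub_le_of_norm_hasFDerivWithin_le
      hdiffJ hbound hp hq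
    have e : S.J q - fderiv ℝ S.J u₀ q - (S.J p - fderiv ℝ S.J u₀ p)
        = S.J q - S.J p - fderiv ℝ S.J u₀ (q - p) := by
      rw [map_sub]; ring
    calc |S.J q - S.J p - fderiv ℝ S.J u₀ (q - p)|
        = ‖S.J q - fderiv ℝ S.J u₀ q - (S.J p - fderiv ℝ S.J u₀ p)‖ := by
          rw [e, Real.norm_eq_abs]
    _ ≤ c * ‖q - p‖ := hkey
  have hmc : Tendsto (fun h : ↥S.Xp => m ↑(w₀ + h)) (𝓝 0) (𝓝 u₀) := by
    have h1 := ((S.m_cont hm hI1 hI2 hI3 hI4).tendsto w₀)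
    have h2 : Tendsto (fun h : ↥S.Xp => w₀ + h) (𝓝 0) (𝓝 w₀) := by
      have h3 := (tendsto_const_nhds (x := w₀) (f := (𝓝 (0 : ↥S.Xp)))).add
        (tendsto_id (x := 𝓝 (0 : ↥S.Xp)))
      simpa using h3
    exact h1.comp h2
  have hev1 : ∀ᶠ h : ↥S.Xp in 𝓝 0, ‖m ↑(w₀ + h) - u₀‖ < δ / 2 := by
    have := hmc.eventually (Metric.ball_mem_nhds u₀ (show (0:ℝ) < δ / 2 by linarith))
    filter_upwards [this] with h hh
    rwa [dist_eq_norm] at hh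
  have hev2 : ∀ᶠ h : ↥S.Xp in 𝓝 0, ‖h‖ < δ / 2 := by
    have := Metric.ball_mem_nhds (0 : ↥S.Xp) (show (0:ℝ) < δ / 2 by linarith)
    filter_upwards [this] with h hh
    rwa [Metric.mem_ball, dist_zero_right] at hh
  filter_upwards [hev1, hev2] with h h1 h2
  set v : X := (↑h : X) with hv
  have hveq : ‖v‖ = ‖h‖ := rfl
  have hcoe : ((w₀ + h : ↥S.Xp) : X) = ↑w₀ + v := rfl
  have hub : S.Jt m (w₀ + h) - S.Jt m w₀ ≤ S.J (m ↑(w₀ + h)) - S.J (m ↑(w₀ + h) - v) := by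
    have hz : m ↑(w₀ + h) - ↑(w₀ + h) ∈ S.Xm := (hm _ (w₀ + h).2).2.1
    have e1 : m ↑(w₀ + h) - v = ↑w₀ + (m ↑(w₀ + h) - ↑(w₀ + h)) := by
      rw [hcoe]; abel
    have h3 : S.J (m ↑(w₀ + h) - v) ≤ S.J (m ↑w₀) := by
      rw [e1]; exact S.J_le_m hm w₀.2 hz
    have e2 : S.Jt m (w₀ + h) = S.J (m ↑(w₀ + h)) := rfl
    have e3 : S.Jt m w₀ = S.J u₀ := rfl
    rw [e2, e3]
    linarith
  have hlb : S.J (u₀ + v) - S.J u₀ ≤ S.Jt m (w₀ + h) - S.Jt m w₀ := by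
    have hz : u₀ - ↑w₀ ∈ S.Xm := (hm _ w₀.2).2.1
    have e1 : u₀ + v = ↑(w₀ + h) + (u₀ - ↑w₀) := by
      rw [hcoe]; abel
    have h3 : S.J (u₀ + v) ≤ S.J (m ↑(w₀ + h)) := by
      rw [e1]; exact S.J_le_m hm (w₀ + h).2 hz
    have e2 : S.Jt m (w₀ + h) = S.J (m ↑(w₀ + h)) := rfl
    have e3 : S.Jt m w₀ = S.J u₀ := rfl
    rw [e2, e3]
    linarith
  have hLh : L h = fderiv ℝ S.J u₀ v := rfl
  have est1 : |S.J (u₀ + v) - S.J u₀ - fderiv ℝ S.J u₀ v| ≤ c * ‖h‖ := by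
    have hp : u₀ ∈ Metric.ball u₀ δ := Metric.mem_ball_self hδ0
    have hq : u₀ + v ∈ Metric.ball u₀ δ := by
      rw [Metric.mem_ball, dist_eq_norm]
      have e : u₀ + v - u₀ = v := by abel
      rw [e, hveq]
      linarith
    have hkey := hMVT u₀ (u₀ + v) hp hq
    have e : u₀ + v - u₀ = v := by abel
    rw [e, hveq] at hkey
    exact hkey
  have est2 : |S.J (m ↑(w₀ + h)) - S.J (m ↑(w₀ + h) - v) - fderiv ℝ S.J u₀ v| ≤ c * ‖h‖ := by
    have hq : m ↑(w₀ + h) ∈ Metric.ball u₀ δ := by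
      rw [Metric.mem_ball, dist_eq_norm]
      linarith
    have hp : m ↑(w₀ + h) - v ∈ Metric.ball u₀ δ := by
      rw [Metric.mem_ball, dist_eq_norm]
      have e : m ↑(w₀ + h) - v - u₀ = (m ↑(w₀ + h) - u₀) - v := by abel
      rw [e]
      calc ‖m ↑(w₀ + h) - u₀ - v‖ ≤ ‖m ↑(w₀ + h) - u₀‖ + ‖v‖ := norm_sub_le _ _
      _ < δ := by rw [hveq]; linarith
    have hkey := hMVT (m ↑(w₀ + h) - v) (m ↑(w₀ + h)) hp hq
    have e : m ↑(w₀ + h) - (m ↑(w₀ + h) - v) = v := by abel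
    rw [e, hveq] at hkey
    exact hkey
  rw [Real.norm_eq_abs, abs_le]
  rcases abs_le.mp est1 with ⟨e1l, _⟩
  rcases abs_le.mp est2 with ⟨_, e2r⟩
  rw [hLh]
  constructor
  · linarith
  · linarith

end Setting

end Helpers

/-- Under (I1)–(I5): `𝒥̃ = J ∘ m ∈ C¹(X⁺, ℝ)` and `𝒥̃'(w)z = J'(m(w))z` for all
`w, z ∈ X⁺`. -/
theorem statement6
    {X : Type*} [NormedAddCommGroup X] [NormedSpace ℝ X]
    (S : Setting X)
    (hI1 : S.I1) (hI2 : S.I2) (hI3 : S.I3) (hI4 : S.I4) (hI5 : S.I5)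
    (m : X → X) (hm : S.IsMaxMap m) :
    ContDiff ℝ 1 (S.Jt m) ∧
      ∀ w z : ↥S.Xp, fderiv ℝ (S.Jt m) w z = fderiv ℝ S.J (m (w : X)) (z : X) := by
  have hdiff : ∀ w₀ : ↥S.Xp,
      HasFDerivAt (S.Jt m) ((fderiv ℝ S.J (m ↑w₀)).comp (S.Xp.subtypeL)) w₀ :=
    fun w₀ => S.hasFDerivAt_Jt hm hI1 hI2 hI3 hI4 w₀
  have hfd : ∀ w₀ : ↥S.Xp,
      fderiv ℝ (S.Jt m) w₀ = (fderiv ℝ S.J (m ↑w₀)).comp (S.Xp.subtypeL) :=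
    fun w₀ => (hdiff w₀).fderiv
  constructor
  · rw [contDiff_one_iff_fderiv]
    refine ⟨fun w₀ => (hdiff w₀).differentiableAt, ?_⟩
    have heq : (fderiv ℝ (S.Jt m)) =
        fun w₀ : ↥S.Xp => (fderiv ℝ S.J (m ↑w₀)).comp (S.Xp.subtypeL) := funext hfd
    rw [heq]
    exact Continuous.clm_comp
      ((S.J_contDiff.continuous_fderiv one_ne_zero).comp (S.m_cont hm hI1 hI2 hI3 hI4))
      continuous_const
  · intro w z
    rw [hfd w]
    rfl
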